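/- Let (C,d) be an ultrametric Cantor set whose Michon tree has vertex set V and weight ε(v) = diam([v]). For x ∈ C with corresponding infinite path v₀v₁v₂⋯, define Φ(x) = Σₙ √((ε(vₙ)² − ε(vₙ₊₁)²)/2) · e_{vₙ₊₁} ∈ ℓ²_ℝ(V∗), where {e_v} is the canonical orthonormal basis and V∗ = V ∖ {root}. Then Φ is well-defined (the series converges with ‖Φ(x)‖² = ε(v₀)²/2) and is an isometric embedding: ‖Φ(x) − Φ(y)‖ = d(x,y) for all x,y ∈ C. -/

import Mathlib

/-- A rooted tree, given by its vertex set, a root, a parent map and a height function. -/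
structure MichonTree where
  V : Type
  root : V
  parent : V → V
  parent_root : parent root = root
  height : V → ℕ
  height_root : height root = 0
  height_parent : ∀ v, v ≠ root → height (parent v) + 1 = height v

namespace MichonTree

/-- The boundary of a rooted tree: the set of infinite paths starting at the root. -/
def Boundary (T : MichonTree) : Type :=
  {p : ℕ → T.V // p 0 = T.root ∧ ∀ n, p (n + 1) ≠ T.root ∧ T.parent (p (n + 1)) = p n}

/-- The cylinder set `[v]` of infinite paths passing through the vertex `v`. -/
def Cyl (T : MichonTree) (v : T.V) : Set T.Boundary :=
  {p | p.1 (T.height v) = v}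

/-- The topology on the boundary generated by the cylinder sets. -/
instance (T : MichonTree) : TopologicalSpace T.Boundary :=
  TopologicalSpace.generateFrom {s | ∃ v : T.V, s = T.Cyl v}

/-- `w` is a child of `v`. -/
def IsChild (T : MichonTree) (w v : T.V) : Prop := w ≠ T.root ∧ T.parent w = v

/-- The tree has no dangling vertices: every vertex has a child. -/
def NoDangling (T : MichonTree) : Prop := ∀ v : T.V, ∃ w, T.IsChild w v

/-- `w` is a descendant of `v` (possibly `w = v`). -/
def Descendant (T : MichonTree) (w v : T.V) : Prop := ∃ k : ℕ, T.parent^[k] w = v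

end MichonTree

open MichonTree Classical

/-- The coordinates of Michon's isometric embedding: for a boundary point `x` with path
`v₀v₁v₂⋯` and a non-root vertex `v`, the coordinate at `v` is
`√((ε(parent v)² − ε(v)²)/2)` if `v` lies on the path of `x`, and `0` otherwise; this encodes
`Φ(x) = Σₙ √((ε(vₙ)² − ε(vₙ₊₁)²)/2) e_{vₙ₊₁}`. -/
noncomputable def phiFun (T : MichonTree) (ε : T.V → ℝ) (x : T.Boundary)
    (v : {u : T.V // u ≠ T.root}) : ℝ :=
  if x.1 (T.height v.1) = v.1 then
    Real.sqrt ((ε (T.parent v.1) ^ 2 - ε v.1 ^ 2) / 2)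
  else 0

namespace Stmt12Aux

open scoped ENNReal

variable {T : MichonTree} {ε : T.V → ℝ}

lemma height_path (x : T.Boundary) : ∀ n, T.height (x.1 n) = n := by
  intro n
  induction n with
  | zero => rw [x.2.1, T.height_root]
  | succ n ih =>
    have h := T.height_parent (x.1 (n + 1)) (x.2.2 n).1
    rw [(x.2.2 n).2, ih] at h
    exact h.symm

lemma height_pos {v : T.V} (hv : v ≠ T.root) : T.height v ≠ 0 := by
  have := T.height_parent v hv
  omega

variable (hpos : ∀ v, 0 < ε v) (hdec : ∀ w v : T.V, T.IsChild w v → ε w < ε v)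

include hpos hdec in
lemma arg_nonneg (v : T.V) (hv : v ≠ T.root) :
    0 ≤ (ε (T.parent v) ^ 2 - ε v ^ 2) / 2 := by
  have h1 : ε v < ε (T.parent v) := hdec v (T.parent v) ⟨hv, rfl⟩
  have h2 := hpos v
  nlinarith

include hpos hdec in
lemma phi_sq (x : T.Boundary) (v : {u : T.V // u ≠ T.root}) :
    phiFun T ε x v ^ 2 =
      if x.1 (T.height v.1) = v.1 then (ε (T.parent v.1) ^ 2 - ε v.1 ^ 2) / 2 else 0 := by
  unfold phiFun
  split
  · exact Real.sq_sqrt (arg_nonneg hpos hdec v.1 v.2)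
  · simp

/-- The `n`-th non-root vertex on the path of `x`. -/
def ex (x : T.Boundary) (n : ℕ) : {u : T.V // u ≠ T.root} :=
  ⟨x.1 (n + 1), (x.2.2 n).1⟩

lemma ex_injective (x : T.Boundary) : Function.Injective (ex x) := by
  intro m n h
  have hm : T.height (ex x m).1 = m + 1 := height_path x (m + 1)
  have hn : T.height (ex x n).1 = n + 1 := height_path x (n + 1)
  rw [h, hn] at hm
  omega

lemma phi_ex (x : T.Boundary) (n : ℕ) :
    phiFun T ε x (ex x n) = Real.sqrt ((ε (x.1 n) ^ 2 - ε (x.1 (n + 1)) ^ 2) / 2) := by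
  unfold phiFun ex
  rw [if_pos (by rw [height_path x (n + 1)]), (x.2.2 n).2]

lemma phi_off (x : T.Boundary) (v : {u : T.V // u ≠ T.root}) (hv : v ∉ Set.range (ex x)) :
    phiFun T ε x v = 0 := by
  unfold phiFun
  rw [if_neg]
  intro h
  obtain ⟨k, hk⟩ := Nat.exists_eq_succ_of_ne_zero (height_pos v.2)
  rw [hk] at h
  exact hv ⟨k, Subtype.ext h⟩

include hpos hdec in
lemma hasSum_tele (x : T.Boundary)
    (hlim : Filter.Tendsto (fun n => ε (x.1 n)) Filter.atTop (nhds 0)) :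
    HasSum (fun n : ℕ => (ε (x.1 n) ^ 2 - ε (x.1 (n + 1)) ^ 2) / 2) (ε T.root ^ 2 / 2) := by
  have hnn : ∀ n : ℕ, 0 ≤ (ε (x.1 n) ^ 2 - ε (x.1 (n + 1)) ^ 2) / 2 := by
    intro n
    have h1 : ε (x.1 (n + 1)) < ε (x.1 n) := hdec _ _ ⟨(x.2.2 n).1, (x.2.2 n).2⟩
    have h2 := hpos (x.1 (n + 1))
    nlinarith
  rw [hasSum_iff_tendsto_nat_of_nonneg hnn]
  have heq : ∀ N : ℕ, ∑ i ∈ Finset.range N, (ε (x.1 i) ^ 2 - ε (x.1 (i + 1)) ^ 2) / 2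
      = ε (x.1 0) ^ 2 / 2 - ε (x.1 N) ^ 2 / 2 := by
    intro N
    rw [show (fun i => (ε (x.1 i) ^ 2 - ε (x.1 (i + 1)) ^ 2) / 2)
        = fun i => (ε (x.1 i) ^ 2 / 2) - (ε (x.1 (i + 1)) ^ 2 / 2) from funext fun i => by ring]
    exact Finset.sum_range_sub' (fun i => ε (x.1 i) ^ 2 / 2) N
  simp only [heq, x.2.1]
  have h0 : Filter.Tendsto (fun N : ℕ => ε (x.1 N) ^ 2 / 2) Filter.atTop (nhds 0) := by
    have := ((hlim.pow 2).div_const 2)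
    simpa using this
  have := (tendsto_const_nhds (x := ε T.root ^ 2 / 2) (f := Filter.atTop (α := ℕ))).sub h0
  simpa using this

include hpos hdec in
lemma hasSum_phi_sq (x : T.Boundary)
    (hlim : Filter.Tendsto (fun n => ε (x.1 n)) Filter.atTop (nhds 0)) :
    HasSum (fun v => phiFun T ε x v ^ 2) (ε T.root ^ 2 / 2) := by
  rw [← Function.Injective.hasSum_iff (ex_injective x)
    (fun v hv => by rw [phi_off x v hv]; ring)]
  have : (fun v => phiFun T ε x v ^ 2) ∘ ex x
      = fun n => (ε (x.1 n) ^ 2 - ε (x.1 (n + 1)) ^ 2) / 2 := by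
    funext n
    simp only [Function.comp_apply, phi_ex]
    refine Real.sq_sqrt ?_
    have h1 : ε (x.1 (n + 1)) < ε (x.1 n) := hdec _ _ ⟨(x.2.2 n).1, (x.2.2 n).2⟩
    have h2 := hpos (x.1 (n + 1))
    nlinarith
  rw [this]
  exact hasSum_tele hpos hdec x hlim

lemma phi_eq_of_agree (x y : T.Boundary) (v : {u : T.V // u ≠ T.root})
    (h : x.1 (T.height v.1) = y.1 (T.height v.1)) :
    phiFun T ε x v = phiFun T ε y v := by
  unfold phiFun
  rw [h]

include hpos hdec in
lemma hasSum_cross (x y : T.Boundary) (n₀ : ℕ)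
    (hagree : ∀ k, k ≤ n₀ → x.1 k = y.1 k)
    (hneq : ∀ n, n₀ ≤ n → x.1 (n + 1) ≠ y.1 (n + 1)) :
    HasSum (fun v => phiFun T ε x v * phiFun T ε y v)
      ((ε T.root ^ 2 - ε (x.1 n₀) ^ 2) / 2) := by
  have key : ∀ v ∉ (Finset.range n₀).image (ex x), phiFun T ε x v * phiFun T ε y v = 0 := by
    intro v hv
    by_contra hne
    have hx : phiFun T ε x v ≠ 0 := fun h => hne (by rw [h]; ring)
    have hy : phiFun T ε y v ≠ 0 := fun h => hne (by rw [h]; ring)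
    have hxv : x.1 (T.height v.1) = v.1 := by
      by_contra h; exact hx (by unfold phiFun; rw [if_neg h])
    have hyv : y.1 (T.height v.1) = v.1 := by
      by_contra h; exact hy (by unfold phiFun; rw [if_neg h])
    obtain ⟨k, hk⟩ := Nat.exists_eq_succ_of_ne_zero (height_pos v.2)
    rw [hk] at hxv hyv
    have hkn : k < n₀ := by
      by_contra h
      exact hneq k (by omega) (hxv.trans hyv.symm)
    exact hv (Finset.mem_image.2 ⟨k, Finset.mem_range.2 hkn, Subtype.ext hxv⟩)
  have hsum : HasSum (fun v => phiFun T ε x v * phiFun T ε y v)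
      (∑ v ∈ (Finset.range n₀).image (ex x), phiFun T ε x v * phiFun T ε y v) :=
    hasSum_sum_of_ne_finset_zero key
  have hval : ∑ v ∈ (Finset.range n₀).image (ex x), phiFun T ε x v * phiFun T ε y v
      = (ε T.root ^ 2 - ε (x.1 n₀) ^ 2) / 2 := by
    rw [Finset.sum_image (fun a _ b _ h => ex_injective x h)]
    have hterm : ∀ k ∈ Finset.range n₀, phiFun T ε x (ex x k) * phiFun T ε y (ex x k)
        = ε (x.1 k) ^ 2 / 2 - ε (x.1 (k + 1)) ^ 2 / 2 := by
      intro k hk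
      have hk' : k < n₀ := Finset.mem_range.1 hk
      have heq : phiFun T ε y (ex x k) = phiFun T ε x (ex x k) := by
        refine (phi_eq_of_agree x y (ex x k) ?_).symm
        rw [show T.height (ex x k).1 = k + 1 from height_path x (k + 1)]
        exact hagree (k + 1) (by omega)
      rw [heq, ← sq, phi_sq hpos hdec]
      rw [if_pos (by rw [show T.height (ex x k).1 = k + 1 from height_path x (k + 1)]; rfl)]
      show (ε (T.parent (x.1 (k + 1))) ^ 2 - ε (x.1 (k + 1)) ^ 2) / 2 = _
      rw [(x.2.2 k).2]; ring
    rw [Finset.sum_congr rfl hterm, Finset.sum_range_sub' (fun i => ε (x.1 i) ^ 2 / 2) n₀,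
      x.2.1]
    ring
  rwa [hval] at hsum

lemma norm_rpow_eq (a : ℝ) : ‖a‖ ^ (2 : ℝ≥0∞).toReal = a ^ 2 := by
  have h : ((2 : ℝ≥0∞)).toReal = ((2 : ℕ) : ℝ) := by norm_num
  rw [h, Real.rpow_natCast, Real.norm_eq_abs]
  exact sq_abs a

end Stmt12Aux

open Stmt12Aux in
open scoped ENNReal in
/-- Michon's embedding `Φ` of an ultrametric Cantor set (the boundary of its
weighted Michon tree, with `d x y = ε (x ∧ y)`) into `ℓ²_ℝ(V∗)` is well defined, with
`‖Φ x‖² = ε(root)²/2`, and is an isometry: `‖Φ x − Φ y‖ = d x y`. -/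
theorem stmt_12 (T : MichonTree) (hnd : T.NoDangling)
    (hfin : ∀ v : T.V, {w : T.V | T.IsChild w v}.Finite)
    (hred : ∀ v : T.V, ∃ w₁ w₂ : T.V, T.IsChild w₁ v ∧ T.IsChild w₂ v ∧ w₁ ≠ w₂)
    (ε : T.V → ℝ) (hpos : ∀ v, 0 < ε v)
    (hdec : ∀ w v : T.V, T.IsChild w v → ε w < ε v)
    (hlim : ∀ p : T.Boundary, Filter.Tendsto (fun n => ε (p.1 n)) Filter.atTop (nhds 0))
    (d : T.Boundary → T.Boundary → ℝ)
    (hd_diag : ∀ x, d x x = 0)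
    (hd_val : ∀ (x y : T.Boundary) (n : ℕ), x.1 n = y.1 n → x.1 (n + 1) ≠ y.1 (n + 1) →
      d x y = ε (x.1 n)) :
    (∀ x : T.Boundary, Memℓp (phiFun T ε x) 2) ∧
    ∃ Φ : T.Boundary → lp (fun _ : {u : T.V // u ≠ T.root} => ℝ) 2,
      (∀ x v, (Φ x : ∀ _ : {u : T.V // u ≠ T.root}, ℝ) v = phiFun T ε x v) ∧
      (∀ x, ‖Φ x‖ ^ 2 = ε T.root ^ 2 / 2) ∧
      (∀ x y, ‖Φ x - Φ y‖ = d x y) := by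
  have htR : (0 : ℝ) < (2 : ℝ≥0∞).toReal := by norm_num
  have hmem : ∀ x : T.Boundary, Memℓp (phiFun T ε x) 2 := by
    intro x
    apply memℓp_gen
    refine ((hasSum_phi_sq hpos hdec x (hlim x)).summable).congr fun v => ?_
    exact (norm_rpow_eq _).symm
  refine ⟨hmem, fun x => ⟨phiFun T ε x, hmem x⟩, fun x v => rfl, ?_, ?_⟩
  · intro x
    have h := lp.norm_rpow_eq_tsum htR (⟨phiFun T ε x, hmem x⟩ :
      lp (fun _ : {u : T.V // u ≠ T.root} => ℝ) 2)
    have h2 : (∑' v, ‖phiFun T ε x v‖ ^ (2 : ℝ≥0∞).toReal) = ε T.root ^ 2 / 2 := by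
      rw [show (fun v => ‖phiFun T ε x v‖ ^ (2 : ℝ≥0∞).toReal)
          = fun v => phiFun T ε x v ^ 2 from funext fun v => norm_rpow_eq _]
      exact (hasSum_phi_sq hpos hdec x (hlim x)).tsum_eq
    have h3 : ‖(⟨phiFun T ε x, hmem x⟩ : lp (fun _ : {u : T.V // u ≠ T.root} => ℝ) 2)‖
        ^ (2 : ℝ≥0∞).toReal
        = ‖(⟨phiFun T ε x, hmem x⟩ : lp (fun _ : {u : T.V // u ≠ T.root} => ℝ) 2)‖ ^ 2 := by
      rw [show ((2 : ℝ≥0∞)).toReal = ((2 : ℕ) : ℝ) from by norm_num, Real.rpow_natCast]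
    rw [← h3, h, h2]
  · intro x y
    by_cases hxy : x = y
    · rw [hxy, sub_self, norm_zero, hd_diag]
    · have hex : ∃ n, x.1 n ≠ y.1 n := by
        by_contra h
        push_neg at h
        exact hxy (Subtype.ext (funext h))
      set m := Nat.find hex with hm
      have hm0 : m ≠ 0 := by
        intro h
        have := Nat.find_spec hex
        rw [← hm, h] at this
        exact this (x.2.1.trans y.2.1.symm)
      obtain ⟨n₀, hn₀⟩ := Nat.exists_eq_succ_of_ne_zero hm0
      have hagree : ∀ k, k ≤ n₀ → x.1 k = y.1 k := by
        intro k hk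
        by_contra h
        have hle : m ≤ k := Nat.find_le h
        omega
      have hneq : ∀ n, n₀ ≤ n → x.1 (n + 1) ≠ y.1 (n + 1) := by
        intro n hn
        induction n, hn using Nat.le_induction with
        | base =>
          have := Nat.find_spec hex
          rwa [← hm, hn₀] at this
        | succ n hn ih =>
          intro h
          apply ih
          have hpx := (x.2.2 (n + 1)).2
          have hpy := (y.2.2 (n + 1)).2
          rw [← hpx, ← hpy, h]
      have hd : d x y = ε (x.1 n₀) := hd_val x y n₀ (hagree n₀ le_rfl) (hneq n₀ le_rfl)
      have hsum : HasSum (fun v => (phiFun T ε x v - phiFun T ε y v) ^ 2)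
          (ε (x.1 n₀) ^ 2) := by
        have h1 := hasSum_phi_sq hpos hdec x (hlim x)
        have h2 := hasSum_phi_sq hpos hdec y (hlim y)
        have h3 := hasSum_cross hpos hdec x y n₀ hagree hneq
        have h4 := (h1.add h2).sub (h3.mul_left 2)
        have h5 : (ε T.root ^ 2 / 2 + ε T.root ^ 2 / 2
            - 2 * ((ε T.root ^ 2 - ε (x.1 n₀) ^ 2) / 2)) = ε (x.1 n₀) ^ 2 := by ring
        rw [h5] at h4
        have h6 : (fun v => (phiFun T ε x v - phiFun T ε y v) ^ 2)
            = fun v => phiFun T ε x v ^ 2 + phiFun T ε y v ^ 2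
              - 2 * (phiFun T ε x v * phiFun T ε y v) := funext fun v => by ring
        rw [h6]
        exact h4
      set f : lp (fun _ : {u : T.V // u ≠ T.root} => ℝ) 2 :=
        (⟨phiFun T ε x, hmem x⟩ : lp _ 2) - ⟨phiFun T ε y, hmem y⟩ with hf
      show ‖f‖ = d x y
      have hnorm := lp.norm_rpow_eq_tsum htR f
      have hcoe : ∀ v, (f : ∀ _ : {u : T.V // u ≠ T.root}, ℝ) v
          = phiFun T ε x v - phiFun T ε y v := by
        intro v
        rw [hf, lp.coeFn_sub]
        rfl
      have ht : (∑' v, ‖(f : ∀ _ : {u : T.V // u ≠ T.root}, ℝ) v‖ ^ (2 : ℝ≥0∞).toReal)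
          = ε (x.1 n₀) ^ 2 := by
        rw [show (fun v => ‖(f : ∀ _ : {u : T.V // u ≠ T.root}, ℝ) v‖ ^ (2 : ℝ≥0∞).toReal)
            = fun v => (phiFun T ε x v - phiFun T ε y v) ^ 2 from
          funext fun v => by rw [norm_rpow_eq, hcoe]]
        exact hsum.tsum_eq
      have h7 : ‖f‖ ^ 2 = ε (x.1 n₀) ^ 2 := by
        have h3 : ‖f‖ ^ (2 : ℝ≥0∞).toReal = ‖f‖ ^ 2 := by
          rw [show ((2 : ℝ≥0∞)).toReal = ((2 : ℕ) : ℝ) from by norm_num, Real.rpow_natCast]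
        rw [← h3, hnorm, ht]
      have h8 : ‖f‖ = ε (x.1 n₀) := by
        have hs := Real.sqrt_sq (norm_nonneg f)
        rw [← hs, h7, Real.sqrt_sq (hpos _).le]
      rw [h8, hd]
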